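/- arXiv:1303.6207 — 3 statements merged into one kernel-verified Lean document; each statement's English description precedes it below -/
import Mathlib

section
/- Let A be a unital C*-algebra, let n be a positive natural number, let P be an n×n complex matrix that is positive semidefinite, and let Q be an n×n matrix with entries in A that is positive, i.e. 0 ≤ Q as an element of the C*-algebra of n×n matrices over A. Then the element Σ_{i,j} P i j • Q i j of A (where • denotes the scalar action of ℂ on A) is positive, i.e. 0 ≤ Σ_{i,j} P i j • Q i j in A. -/
open scoped ComplexOrder Matrix

/-!
Factor `P = Bᴴ * B` and `Q = Rᴴ * R`. Then `∑ i j, P i j • Q i j` is the sum over `k` and `m`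
of `star wₖₘ * wₖₘ` with `wₖₘ = ∑ j, B m j • R k j`, a sum of positive elements.
-/

namespace Matrix

variable {𝕜 : Type*} [RCLike 𝕜] {m n : Type*} [Fintype n]

theorem PosSemidef.exists_eq_conjTranspose_mul_self {P : Matrix n n 𝕜} (hP : P.PosSemidef) :
    ∃ B : Matrix n n 𝕜, P = Bᴴ * B := by
  classical
  open scoped MatrixOrder Matrix.Norms.L2Operator in
  exact CStarAlgebra.nonneg_iff_eq_star_mul_self.mp hP.nonneg

variable {A : Type*} [NonUnitalSemiring A] [StarRing A] [Module 𝕜 A]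

theorem sum_smul_conjTranspose_mul_apply [Fintype m] (P : Matrix n n 𝕜) (R : Matrix m n A) :
    ∑ i, ∑ j, P i j • (Rᴴ * R) i j = ∑ k, ∑ i, ∑ j, P i j • (star (R k i) * R k j) := by
  simp only [mul_apply, conjTranspose_apply, Finset.smul_sum]
  exact (Finset.sum_congr rfl fun i _ => Finset.sum_comm).trans Finset.sum_comm

variable [StarModule 𝕜 A] [IsScalarTower 𝕜 A A] [SMulCommClass 𝕜 A A]

theorem sum_conjTranspose_mul_apply_smul_star_mul [Fintype m] (B : Matrix m n 𝕜) (v : n → A) :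
    ∑ i, ∑ j, (Bᴴ * B) i j • (star (v i) * v j)
      = ∑ k, star (∑ i, B k i • v i) * ∑ j, B k j • v j := by
  simp only [mul_apply, conjTranspose_apply, Finset.sum_smul, star_sum, Finset.sum_mul,
    Finset.mul_sum, star_smul, smul_mul_smul_comm, RCLike.star_def]
  exact ((Finset.sum_congr rfl fun i _ => Finset.sum_comm).trans Finset.sum_comm).trans
    (Finset.sum_congr rfl fun k _ => Finset.sum_comm)

theorem PosSemidef.sum_smul_star_mul_nonneg [PartialOrder A] [StarOrderedRing A]
    {P : Matrix n n 𝕜} (hP : P.PosSemidef) (v : n → A) :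
    0 ≤ ∑ i, ∑ j, P i j • (star (v i) * v j) := by
  obtain ⟨B, rfl⟩ := hP.exists_eq_conjTranspose_mul_self
  rw [sum_conjTranspose_mul_apply_smul_star_mul]
  exact Finset.sum_nonneg fun k _ => star_mul_self_nonneg _

end Matrix

theorem sum_smul_entries_nonneg_of_posSemidef_general
    {A : Type*} [CStarAlgebra A] [PartialOrder A] [StarOrderedRing A]
    (n : ℕ)
    (P : Matrix (Fin n) (Fin n) ℂ) (hP : P.PosSemidef)
    (Q : Matrix (Fin n) (Fin n) A)
    (hQ : ∃ R : Matrix (Fin n) (Fin n) A, Q = Rᴴ * R) :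
    0 ≤ ∑ i, ∑ j, P i j • Q i j := by
  obtain ⟨R, rfl⟩ := hQ
  rw [Matrix.sum_smul_conjTranspose_mul_apply]
  exact Finset.sum_nonneg fun k _ => hP.sum_smul_star_mul_nonneg (R k)

/-- Let `A` be a unital C*-algebra, `n` a positive natural number,
`P` an `n × n` complex positive semidefinite matrix, and `Q` an `n × n` matrix over `A`
that is positive as an element of the C*-algebra of `n × n` matrices over `A`
(equivalently, `Q = Rᴴ * R` for some matrix `R` over `A`).  Then
`∑ i j, P i j • Q i j` is a positive element of `A`. -/
theorem sum_smul_entries_nonneg_of_posSemidef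
    {A : Type*} [CStarAlgebra A] [PartialOrder A] [StarOrderedRing A]
    (n : ℕ) (hn : 0 < n)
    (P : Matrix (Fin n) (Fin n) ℂ) (hP : P.PosSemidef)
    (Q : Matrix (Fin n) (Fin n) A)
    (hQ : ∃ R : Matrix (Fin n) (Fin n) A, Q = Rᴴ * R) :
    0 ≤ ∑ i, ∑ j, P i j • Q i j :=
  sum_smul_entries_nonneg_of_posSemidef_general n P hP Q hQ
end

section
/- Let A be a unital C*-algebra, let n be a positive natural number, let P be an n×n complex matrix that is positive definite, and let Q be an n×n matrix with entries in A that is positive (0 ≤ Q in the C*-algebra of n×n matrices over A). Then there exists a real constant c > 0 such that c • (Σ_i Q i i) ≤ Σ_{i,j} P i j • Q i j in A. -/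
open scoped ComplexOrder Matrix

/-!
Write `Q = Rᴴ * R`. For a positive semidefinite `M = Sᴴ * S` the pairing `∑ i j, M i j • Q i j`
is the sum over `k, m` of `x⋆ * x` with `x = ∑ i, S m i • R k i`, hence nonnegative. A positive
definite `P` has strictly positive spectrum, so `P - c • 1` is positive semidefinite for some
`c > 0`; the pairing with `c • 1` is `c • ∑ i, Q i i`.
-/

namespace Matrix

variable {𝕜 ι : Type*} [RCLike 𝕜] [Fintype ι]

section StarModule

variable {A : Type*} [NonUnitalRing A] [StarRing A]
  [Module 𝕜 A] [StarModule 𝕜 A] [IsScalarTower 𝕜 A A] [SMulCommClass 𝕜 A A]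

lemma sum_smul_conjTranspose_mul_self_eq_sum_star_mul_self
    (S : Matrix ι ι 𝕜) (a : ι → A) :
    ∑ i, ∑ j, (Sᴴ * S) i j • (star (a i) * a j)
      = ∑ k, star (∑ i, S k i • a i) * ∑ j, S k j • a j := by
  simp_rw [star_sum, Finset.sum_mul, Finset.mul_sum, star_smul, smul_mul_assoc, mul_smul_comm,
    smul_smul, mul_apply, conjTranspose_apply, Finset.sum_smul]
  exact (Finset.sum_congr rfl fun _ _ => Finset.sum_comm).trans Finset.sum_comm

variable [PartialOrder A] [StarOrderedRing A]

lemma PosSemidef.sum_smul_star_mul_nonneg_s1 {M : Matrix ι ι 𝕜} (hM : M.PosSemidef)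
    (a : ι → A) : 0 ≤ ∑ i, ∑ j, M i j • (star (a i) * a j) := by
  classical
  obtain ⟨S, rfl⟩ : ∃ S : Matrix ι ι 𝕜, M = Sᴴ * S := by
    open scoped MatrixOrder Matrix.Norms.L2Operator in
    exact CStarAlgebra.nonneg_iff_eq_star_mul_self.mp hM.nonneg
  rw [sum_smul_conjTranspose_mul_self_eq_sum_star_mul_self]
  exact Finset.sum_nonneg fun k _ => star_mul_self_nonneg _

lemma PosSemidef.sum_smul_conjTranspose_mul_apply_nonneg {κ : Type*} [Fintype κ]
    {M : Matrix ι ι 𝕜} (hM : M.PosSemidef) (R : Matrix κ ι A) :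
    0 ≤ ∑ i, ∑ j, M i j • (Rᴴ * R) i j := by
  simp_rw [mul_apply, conjTranspose_apply, Finset.smul_sum]
  rw [(Finset.sum_congr rfl fun _ _ => Finset.sum_comm).trans Finset.sum_comm]
  exact Finset.sum_nonneg fun k _ => hM.sum_smul_star_mul_nonneg_s1 (R k)

end StarModule

lemma sum_smul_apply_sub_smul_one {M : Type*} [AddCommGroup M] [Module 𝕜 M] [DecidableEq ι]
    (P : Matrix ι ι 𝕜) (c : 𝕜) (Q : Matrix ι ι M) :
    ∑ i, ∑ j, (P - c • 1) i j • Q i j = ∑ i, ∑ j, P i j • Q i j - c • ∑ i, Q i i := by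
  simp [sub_smul, Finset.sum_sub_distrib, one_apply, ite_smul, Finset.smul_sum]

open scoped MatrixOrder Matrix.Norms.L2Operator in
lemma PosDef.exists_pos_posSemidef_sub_smul_one [DecidableEq ι] {P : Matrix ι ι 𝕜}
    (hP : P.PosDef) : ∃ c : ℝ, 0 < c ∧ (P - (c : 𝕜) • 1).PosSemidef := by
  cases isEmpty_or_nonempty ι
  · exact ⟨1, one_pos, by simp [Subsingleton.elim (P - _) 0, PosSemidef.zero]⟩
  obtain ⟨c, hc, hcP⟩ := (CFC.exists_pos_algebraMap_le_iff hP.isStrictlyPositive.isSelfAdjoint).2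
    fun x hx => hP.isStrictlyPositive.spectrum_pos hx
  refine ⟨c, hc, ?_⟩
  rwa [le_iff, Algebra.algebraMap_eq_smul_one, RCLike.real_smul_eq_coe_smul (K := 𝕜)] at hcP

end Matrix

theorem exists_pos_smul_trace_le_sum_smul_entries_of_posDef_general
    {A : Type*} [CStarAlgebra A] [PartialOrder A] [StarOrderedRing A]
    (n : ℕ)
    (P : Matrix (Fin n) (Fin n) ℂ) (hP : P.PosDef)
    (Q : Matrix (Fin n) (Fin n) A)
    (hQ : ∃ R : Matrix (Fin n) (Fin n) A, Q = Rᴴ * R) :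
    ∃ c : ℝ, 0 < c ∧ c • (∑ i, Q i i) ≤ ∑ i, ∑ j, P i j • Q i j := by
  obtain ⟨R, rfl⟩ := hQ
  obtain ⟨c, hc, hPc⟩ := hP.exists_pos_posSemidef_sub_smul_one
  refine ⟨c, hc, sub_nonneg.mp ?_⟩
  rw [← Complex.coe_smul, ← Matrix.sum_smul_apply_sub_smul_one]
  exact hPc.sum_smul_conjTranspose_mul_apply_nonneg R

/-- Let `A` be a unital C*-algebra, `n` a positive natural number,
`P` an `n × n` complex positive definite matrix, and `Q` an `n × n` matrix over `A`
that is positive as an element of the C*-algebra of `n × n` matrices over `A`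
(equivalently, `Q = Rᴴ * R` for some matrix `R` over `A`).  Then there is a real
constant `c > 0` with `c • (∑ i, Q i i) ≤ ∑ i j, P i j • Q i j` in `A`. -/
theorem exists_pos_smul_trace_le_sum_smul_entries_of_posDef
    {A : Type*} [CStarAlgebra A] [PartialOrder A] [StarOrderedRing A]
    (n : ℕ) (hn : 0 < n)
    (P : Matrix (Fin n) (Fin n) ℂ) (hP : P.PosDef)
    (Q : Matrix (Fin n) (Fin n) A)
    (hQ : ∃ R : Matrix (Fin n) (Fin n) A, Q = Rᴴ * R) :
    ∃ c : ℝ, 0 < c ∧ c • (∑ i, Q i i) ≤ ∑ i, ∑ j, P i j • Q i j :=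
  exists_pos_smul_trace_le_sum_smul_entries_of_posDef_general n P hP Q hQ
end

section
/- Let A be a unital C*-algebra, let n be a positive natural number, and let Q be an n×n matrix with entries in A that is positive (0 ≤ Q in the C*-algebra of n×n matrices over A) and such that the diagonal entry Q k k is invertible in A for some index k. Let H be an n-dimensional complex inner product space with orthonormal basis (ξ_1, …, ξ_n), and let ρ be a positive invertible linear operator on H. Then the element b = Σ_{i,j} ⟪ρ ξ_i, ξ_j⟫ • Q i j of A is positive and invertible, and there exists a real constant c > 0 such that c • (Σ_i Q i i) ≤ b in A. -/
open scoped ComplexOrder Matrix InnerProductSpace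

/-! Writing `m i j = ⟪ρ ξᵢ, ξⱼ⟫`, the element `b` is the pairing `∑ m i j • Q i j` of a positive
matrix over `ℂ` with a positive matrix over `A`. Decomposing `m` as a sum of rank-one matrices
`w wᴴ` turns each piece of the pairing into a quadratic form `x* Q x ≥ 0`. The pairing is therefore
monotone in the operator, and an invertible positive `ρ` dominates `c • 1` for some `c > 0`, so
`b ≥ c • ∑ Q i i ≥ c • Q k k`. The right-hand side is strictly positive, hence so is `b`. -/

namespace Matrix

variable {n : Type*} [Fintype n] {𝕜 : Type*} [RCLike 𝕜]
  {A : Type*} [Ring A] [StarRing A] [Algebra 𝕜 A] [StarModule 𝕜 A]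

theorem sum_sum_vecMulVec_smul_eq_dotProduct_mulVec (w : n → 𝕜) (Q : Matrix n n A) :
    ∑ i, ∑ j, vecMulVec w (star w) i j • Q i j
      = star (algebraMap 𝕜 A ∘ star w) ⬝ᵥ Q *ᵥ (algebraMap 𝕜 A ∘ star w) := by
  simp only [dotProduct, mulVec, Finset.mul_sum]
  refine Finset.sum_congr rfl fun i _ => Finset.sum_congr rfl fun j _ => ?_
  simp only [vecMulVec_apply, Algebra.smul_def, map_mul, Pi.star_apply, Function.comp_apply,
    ← algebraMap_star_comm, star_star, mul_assoc, Algebra.commutes (star (w j))]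

theorem PosSemidef.sum_sum_smul_nonneg [PartialOrder A] [IsOrderedAddMonoid A]
    {m : Matrix n n 𝕜} (hm : m.PosSemidef) {Q : Matrix n n A} (hQ : Q.PosSemidef) :
    0 ≤ ∑ i, ∑ j, m i j • Q i j := by
  obtain ⟨r, w, rfl⟩ := posSemidef_iff_eq_sum_vecMulVec.mp hm
  have hsum : ∑ i, ∑ j, (∑ l, vecMulVec (w l) (star (w l))) i j • Q i j
      = ∑ l, ∑ i, ∑ j, vecMulVec (w l) (star (w l)) i j • Q i j := by
    simp only [Matrix.sum_apply, Finset.sum_smul]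
    exact (Finset.sum_congr rfl fun _ _ => Finset.sum_comm).trans Finset.sum_comm
  rw [hsum]
  exact Finset.sum_nonneg fun l _ =>
    sum_sum_vecMulVec_smul_eq_dotProduct_mulVec (w l) Q ▸ hQ.dotProduct_mulVec_nonneg _

end Matrix

section InnerPairing

variable {𝕜 E ι : Type*} [RCLike 𝕜] [NormedAddCommGroup E] [InnerProductSpace 𝕜 E] [Fintype ι]

theorem Orthonormal.sum_sum_inner_smul_eq_trace {A : Type*} [AddCommGroup A] [Module 𝕜 A]
    {v : ι → E} (hv : Orthonormal 𝕜 v) (Q : Matrix ι ι A) :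
    ∑ i, ∑ j, ⟪v i, v j⟫_𝕜 • Q i j = Q.trace := by
  classical
  simp [orthonormal_iff_ite.mp hv, ite_smul, Matrix.trace]

theorem LinearMap.IsPositive.posSemidef_inner_map {T : E →ₗ[𝕜] E} (hT : T.IsPositive)
    (v : ι → E) : (Matrix.of fun i j => ⟪T (v i), v j⟫_𝕜).PosSemidef := by
  refine .of_dotProduct_mulVec_nonneg ?_ fun x => ?_
  · ext i j
    simp only [Matrix.conjTranspose_apply, Matrix.of_apply, RCLike.star_def, inner_conj_symm]
    exact (hT.isSymmetric _ _).symm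
  · have hquad : star x ⬝ᵥ (Matrix.of fun i j => ⟪T (v i), v j⟫_𝕜) *ᵥ x
        = ⟪T (∑ i, x i • v i), ∑ j, x j • v j⟫_𝕜 := by
      simp only [map_sum, map_smul, sum_inner, inner_sum, inner_smul_left, inner_smul_right,
        dotProduct, Matrix.mulVec, Matrix.of_apply, Finset.mul_sum, Pi.star_apply, RCLike.star_def]
      rw [Finset.sum_comm]
      exact Finset.sum_congr rfl fun i _ => Finset.sum_congr rfl fun j _ => by ring
    exact hquad ▸ hT.inner_nonneg_left _

variable {A : Type*} [Ring A] [StarRing A] [PartialOrder A] [IsOrderedAddMonoid A] [Algebra 𝕜 A]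
  [StarModule 𝕜 A]

theorem LinearMap.sum_sum_inner_smul_le_of_le {S T : E →ₗ[𝕜] E} (hST : S ≤ T) (v : ι → E)
    {Q : Matrix ι ι A} (hQ : Q.PosSemidef) :
    ∑ i, ∑ j, ⟪S (v i), v j⟫_𝕜 • Q i j ≤ ∑ i, ∑ j, ⟪T (v i), v j⟫_𝕜 • Q i j := by
  have := (hST.posSemidef_inner_map v).sum_sum_smul_nonneg hQ
  simpa only [Matrix.of_apply, LinearMap.sub_apply, inner_sub_left, sub_smul,
    Finset.sum_sub_distrib, sub_nonneg] using this

end InnerPairing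

namespace LinearMap

variable {V : Type*} [NormedAddCommGroup V] [InnerProductSpace ℂ V]

theorem isPositive_of_inner_nonneg {T : V →ₗ[ℂ] V} (hT : ∀ x, 0 ≤ ⟪T x, x⟫_ℂ) :
    T.IsPositive :=
  (isPositive_iff_complex T).mpr fun x => by
    obtain ⟨hre, him⟩ := Complex.nonneg_iff.mp (hT x)
    exact ⟨Complex.ext (by simp) (by simp [him]), hre⟩

theorem IsPositive.exists_pos_smul_one_le [FiniteDimensional ℂ V] [Nontrivial V]
    {T : V →ₗ[ℂ] V} (hT : T.IsPositive) (hTu : IsUnit T) :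
    ∃ c : ℝ, 0 < c ∧ (c : ℂ) • 1 ≤ T := by
  set T' := Module.End.toContinuousLinearMap V T
  have hT' : IsStrictlyPositive T' :=
    (hTu.map _).isStrictlyPositive ((ContinuousLinearMap.nonneg_iff_isPositive T').mpr hT)
  obtain ⟨c, hc, hcT⟩ := (CFC.exists_pos_algebraMap_le_iff hT'.isSelfAdjoint).mpr
    fun _ hx => hT'.spectrum_pos hx
  refine ⟨c, hc, ?_⟩
  have hcoe : ((algebraMap ℝ (V →L[ℂ] V) c : V →L[ℂ] V) : V →ₗ[ℂ] V) = (c : ℂ) • 1 := by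
    ext; simp [Algebra.algebraMap_eq_smul_one]
  rwa [← ContinuousLinearMap.coe_le_coe_iff, hcoe] at hcT

end LinearMap

theorem sum_inner_smul_entries_pos_isUnit_and_dominates_trace_general
    {A : Type*} [CStarAlgebra A] [PartialOrder A] [StarOrderedRing A]
    (n : ℕ)
    (Q : Matrix (Fin n) (Fin n) A)
    (hQ : ∃ R : Matrix (Fin n) (Fin n) A, Q = Rᴴ * R)
    (k : Fin n) (hk : IsUnit (Q k k))
    {H : Type*} [NormedAddCommGroup H] [InnerProductSpace ℂ H] [FiniteDimensional ℂ H]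
    (ξ : OrthonormalBasis (Fin n) ℂ H)
    (ρ : H →ₗ[ℂ] H)
    (hpos : ∀ x : H, 0 ≤ (inner ℂ (ρ x) x : ℂ))
    (hbij : Function.Bijective ρ) :
    0 ≤ ∑ i, ∑ j, (inner ℂ (ρ (ξ i)) (ξ j) : ℂ) • Q i j
      ∧ IsUnit (∑ i, ∑ j, (inner ℂ (ρ (ξ i)) (ξ j) : ℂ) • Q i j)
      ∧ ∃ c : ℝ, 0 < c ∧
          c • (∑ i, Q i i) ≤ ∑ i, ∑ j, (inner ℂ (ρ (ξ i)) (ξ j) : ℂ) • Q i j := by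
  have : Nontrivial H := ⟨⟨ξ k, 0, ξ.orthonormal.ne_zero k⟩⟩
  obtain ⟨R, hR⟩ := hQ
  have hQ : Q.PosSemidef := hR ▸ Matrix.posSemidef_conjTranspose_mul_self R
  have hρ : ρ.IsPositive := LinearMap.isPositive_of_inner_nonneg hpos
  obtain ⟨c, hc, hcρ⟩ := hρ.exists_pos_smul_one_le ((Module.End.isUnit_iff ρ).mpr hbij)
  have htrace : c • ∑ i, Q i i ≤ ∑ i, ∑ j, ⟪ρ (ξ i), ξ j⟫_ℂ • Q i j := calc
    c • ∑ i, Q i i = (c : ℂ) • Q.trace := (Complex.coe_smul c _).symm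
    _ = ∑ i, ∑ j, ⟪((c : ℂ) • 1 : H →ₗ[ℂ] H) (ξ i), ξ j⟫_ℂ • Q i j := by
      rw [← ξ.orthonormal.sum_sum_inner_smul_eq_trace]
      simp only [Finset.smul_sum, smul_smul, LinearMap.smul_apply, Module.End.one_apply,
        inner_smul_left, Complex.conj_ofReal]
    _ ≤ _ := LinearMap.sum_sum_inner_smul_le_of_le hcρ ξ hQ
  have hQkk : IsStrictlyPositive (c • Q k k) := (hk.isStrictlyPositive hQ.diag_nonneg).smul hc
  have hQkk_le : c • Q k k ≤ c • ∑ i, Q i i := smul_le_smul_of_nonneg_left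
    (Finset.single_le_sum (f := fun i => Q i i) (fun i _ => hQ.diag_nonneg) (Finset.mem_univ k))
    hc.le
  have hb := hQkk.of_le (hQkk_le.trans htrace)
  exact ⟨hb.nonneg, hb.isUnit, c, hc, htrace⟩

/-- Let `A` be a unital C*-algebra, `n` a positive natural number, and
`Q` an `n × n` matrix over `A` that is positive as an element of the C*-algebra of
`n × n` matrices over `A` (equivalently, `Q = Rᴴ * R` for some `R`), with some diagonal
entry `Q k k` invertible in `A`.  Let `H` be an `n`-dimensional complex inner product
space with orthonormal basis `ξ`, and let `ρ` be a positive invertible operator on `H`.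
Then `b = ∑ i j, ⟪ρ (ξ i), ξ j⟫ • Q i j` is a positive invertible element of `A`, and
there is a real constant `c > 0` with `c • (∑ i, Q i i) ≤ b`. -/
theorem sum_inner_smul_entries_pos_isUnit_and_dominates_trace
    {A : Type*} [CStarAlgebra A] [PartialOrder A] [StarOrderedRing A]
    (n : ℕ) (hn : 0 < n)
    (Q : Matrix (Fin n) (Fin n) A)
    (hQ : ∃ R : Matrix (Fin n) (Fin n) A, Q = Rᴴ * R)
    (k : Fin n) (hk : IsUnit (Q k k))
    {H : Type*} [NormedAddCommGroup H] [InnerProductSpace ℂ H] [FiniteDimensional ℂ H]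
    (ξ : OrthonormalBasis (Fin n) ℂ H)
    (ρ : H →ₗ[ℂ] H)
    (hsa : ∀ x y : H, (inner ℂ (ρ x) y : ℂ) = inner ℂ x (ρ y))
    (hpos : ∀ x : H, 0 ≤ (inner ℂ (ρ x) x : ℂ))
    (hbij : Function.Bijective ρ) :
    0 ≤ ∑ i, ∑ j, (inner ℂ (ρ (ξ i)) (ξ j) : ℂ) • Q i j
      ∧ IsUnit (∑ i, ∑ j, (inner ℂ (ρ (ξ i)) (ξ j) : ℂ) • Q i j)
      ∧ ∃ c : ℝ, 0 < c ∧
          c • (∑ i, Q i i) ≤ ∑ i, ∑ j, (inner ℂ (ρ (ξ i)) (ξ j) : ℂ) • Q i j :=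
  sum_inner_smul_entries_pos_isUnit_and_dominates_trace_general n Q hQ k hk ξ ρ hpos hbij
end
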